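/- The equation x⁴ + 4y⁴ = z² has a nontrivial integer solution with gcd(x,y) = 1 if and only if the equation x⁴ + 6x²y² + y⁴ = z² has a nontrivial integer solution with gcd(x,y) = 1; that is, (∃ x y z : ℤ, gcd(x,y) = 1 ∧ x·y ≠ 0 ∧ x⁴ + 4y⁴ = z²) ↔ (∃ x y z : ℤ, gcd(x,y) = 1 ∧ x·y ≠ 0 ∧ x⁴ + 6x²y² + y⁴ = z²). -/
import Mathlib

/-- Prime-divisor criterion for coprimality of integers. -/
lemma gcd_one_of_primes {x y : ℤ}
    (H : ∀ p : ℕ, p.Prime → (p : ℤ) ∣ x → (p : ℤ) ∣ y → False) : Int.gcd x y = 1 := by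
  by_contra h
  obtain ⟨p, hp, hx, hy⟩ := Nat.Prime.not_coprime_iff_dvd.mp h
  exact H p hp (Int.natCast_dvd.mpr hx) (Int.natCast_dvd.mpr hy)

lemma prime_dvd_one_absurd {p : ℕ} (hp : p.Prime) {x y : ℤ}
    (hgcd : Int.gcd x y = 1) (hx : (p : ℤ) ∣ x) (hy : (p : ℤ) ∣ y) : False := by
  have := Int.dvd_gcd hx hy
  rw [hgcd] at this
  exact hp.not_dvd_one (by exact_mod_cast this)

lemma fourth_of_coprime {a b c : ℤ} (ha : 0 < a) (h : IsCoprime a b)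
    (heq : a * b = c ^ 4) : ∃ d : ℤ, a = d ^ 4 := by
  obtain ⟨d, hd⟩ := exists_associated_pow_of_mul_eq_pow' h heq
  obtain ⟨u, hu⟩ := hd
  rcases Int.units_eq_one_or u with h1 | h1
  · exact ⟨d, by rw [← hu, h1, Units.val_one, mul_one]⟩
  · exfalso
    rw [h1] at hu
    have : a = -(d ^ 4) := by
      rw [← hu]; simp
    nlinarith [pow_le_pow_left₀ (le_refl (0:ℤ)) (le_refl (0:ℤ)) 4, sq_nonneg (d^2), this]

lemma natAbs_lt_of_pow4 {f a : ℤ} (hf : 0 < f ^ 4) (hlt : f ^ 4 < a) :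
    f.natAbs < a.natAbs := by
  have h1 : f.natAbs ≤ f.natAbs ^ 4 := Nat.le_self_pow (by norm_num) _
  have h2 : (f ^ 4).natAbs < a.natAbs :=
    Int.natAbs_lt_natAbs_of_nonneg_of_lt (le_of_lt hf) hlt
  rw [Int.natAbs_pow] at h2
  omega

/-- The key descent step: from `a² = s⁴ + 4r⁴` produce a smaller solution of `f⁴ = e⁴ + s²`. -/
lemma desc {a r s : ℤ} (ha : 0 < a) (hr : r ≠ 0) (hs : s % 2 = 1)
    (hco : Int.gcd r s = 1) (h : a ^ 2 = s ^ 4 + 4 * r ^ 4) :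
    ∃ e f : ℤ, Int.gcd f e = 1 ∧ e ≠ 0 ∧ f ^ 4 = e ^ 4 + s ^ 2 ∧ f.natAbs < a.natAbs := by
  have hs0 : s ≠ 0 := by omega
  -- a is odd
  have ha2 : a % 2 = 1 := by
    rcases Int.even_or_odd a with ⟨t, ht⟩ | hodd
    · exfalso
      have h4 : s ^ 4 = 2 * (2 * t ^ 2 - 2 * r ^ 4) := by
        subst ht; linear_combination -h
      have h5 : (2 : ℤ) ∣ s := Int.Prime.dvd_pow' Nat.prime_two ⟨_, h4⟩
      obtain ⟨u, hu⟩ := h5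
      omega
    · exact Int.odd_iff.mp hodd
  have hr2 : 1 ≤ r ^ 2 := by
    have h0 : 0 < r ^ 2 := by positivity
    omega
  have hr4 : 4 ≤ 4 * r ^ 4 := by nlinarith [hr2]
  have hlt : s ^ 2 < a := by
    nlinarith [sq_nonneg s, sq_nonneg (s ^ 2 - a), sq_nonneg (s ^ 2 + a)]
  have hsq2 : s ^ 2 % 2 = 1 := Int.odd_iff.mp ((Int.odd_iff.mpr hs).pow)
  set α := (a - s ^ 2) / 2 with hαdef
  set β := (a + s ^ 2) / 2 with hβdef
  have hα : a - s ^ 2 = 2 * α := by omega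
  have hβ : a + s ^ 2 = 2 * β := by omega
  have hprod : α * β = r ^ 4 := by
    have h4 : (2 * α) * (2 * β) = 4 * r ^ 4 := by
      rw [← hα, ← hβ]; linear_combination h
    linarith
  have hα0 : 0 < α := by omega
  have hβ0 : 0 < β := by
    have := sq_nonneg s
    omega
  -- gcd a s = 1
  have has : Int.gcd a s = 1 := by
    apply gcd_one_of_primes
    intro p hp hpa hps
    have hp2 : p ≠ 2 := by
      intro h2
      obtain ⟨u, hu⟩ := hps
      rw [h2] at hu
      omega
    have hd4 : (p : ℤ) ∣ 4 * r ^ 4 := by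
      have : (p : ℤ) ∣ a ^ 2 - s ^ 4 := by
        exact dvd_sub (dvd_pow hpa (by norm_num)) (dvd_pow hps (by norm_num))
      rwa [h, add_sub_cancel_left] at this
    have : (p : ℤ) ∣ 4 ∨ (p : ℤ) ∣ r ^ 4 := (Int.Prime.dvd_mul' hp hd4)
    rcases this with h4 | hr'
    · have h4n : (p : ℕ) ∣ 2 ^ 2 := by exact_mod_cast h4
      exact hp2 ((Nat.prime_dvd_prime_iff_eq hp Nat.prime_two).mp (hp.dvd_of_dvd_pow h4n))
    · exact prime_dvd_one_absurd hp hco (Int.Prime.dvd_pow' hp hr') hps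
  -- gcd α β = 1
  have hcoab : Int.gcd α β = 1 := by
    apply gcd_one_of_primes
    intro p hp hpα hpβ
    have hpa : (p : ℤ) ∣ a := by
      have : (p : ℤ) ∣ 2 * α + 2 * β := dvd_add (Dvd.dvd.mul_left hpα 2) (Dvd.dvd.mul_left hpβ 2)
      have h6 : 2 * α + 2 * β = 2 * a := by omega
      rw [h6] at this
      rcases Int.Prime.dvd_mul' hp this with h2 | h2
      · exfalso
        have hp2 : (p : ℕ) ∣ 2 := by exact_mod_cast h2
        have : p = 2 := (Nat.prime_dvd_prime_iff_eq hp Nat.prime_two).mp hp2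
        subst this
        obtain ⟨u, hu⟩ := hpα
        omega
      · exact h2
    have hps : (p : ℤ) ∣ s := by
      have : (p : ℤ) ∣ 2 * β - 2 * α := dvd_sub (Dvd.dvd.mul_left hpβ 2) (Dvd.dvd.mul_left hpα 2)
      have h6 : 2 * β - 2 * α = 2 * s ^ 2 := by omega
      rw [h6] at this
      rcases Int.Prime.dvd_mul' hp this with h2 | h2
      · exfalso
        have hp2 : (p : ℕ) ∣ 2 := by exact_mod_cast h2
        have hpe : p = 2 := (Nat.prime_dvd_prime_iff_eq hp Nat.prime_two).mp hp2
        subst hpe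
        obtain ⟨u, hu⟩ := hpa
        omega
      · exact Int.Prime.dvd_pow' hp h2
    exact prime_dvd_one_absurd hp has hpa hps
  have hcop : IsCoprime α β := Int.isCoprime_iff_gcd_eq_one.mpr hcoab
  obtain ⟨e, he⟩ := fourth_of_coprime hα0 hcop hprod
  obtain ⟨f, hf⟩ := fourth_of_coprime hβ0 hcop.symm (by rw [mul_comm]; exact hprod)
  refine ⟨e, f, ?_, ?_, ?_, ?_⟩
  · apply gcd_one_of_primes
    intro p hp hpf hpe
    exact prime_dvd_one_absurd hp hcoab
      (he ▸ dvd_pow hpe (by norm_num)) (hf ▸ dvd_pow hpf (by norm_num))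
  · intro h0
    rw [h0] at he
    simp at he
    omega
  · have : β - α = s ^ 2 := by omega
    rw [← he, ← hf]
    linarith
  · have hflt : f ^ 4 < a := by
      rw [← hf]
      omega
    exact natAbs_lt_of_pow4 (by rw [← hf]; exact hβ0) hflt

/-- Helper for the `c` odd case of the main descent. -/
lemma sub_case2 {a b m n : ℤ} (ha : a ≠ 0) (hb : b ≠ 0)
    (hmnco : Int.gcd m n = 1) (hm2 : m % 2 = 0) (hn2 : n % 2 = 1)
    (hbsq : b ^ 2 = 2 * m * n) (ha2 : a ^ 2 = m ^ 2 + n ^ 2) :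
    ∃ e f s : ℤ, Int.gcd f e = 1 ∧ e ≠ 0 ∧ s ≠ 0 ∧ f ^ 4 = e ^ 4 + s ^ 2 ∧
      f.natAbs < a.natAbs := by
  have hn0 : n ≠ 0 := by
    intro h0; rw [h0] at hbsq; simp at hbsq; exact hb (by nlinarith [hbsq])
  have hm0 : m ≠ 0 := by
    intro h0; rw [h0] at hbsq; simp at hbsq; exact hb (by nlinarith [hbsq])
  obtain ⟨k, hk⟩ : ∃ k, m = 2 * k := ⟨m / 2, by omega⟩
  have hbe : (2:ℤ) ∣ b := by
    apply Int.Prime.dvd_pow' (k := 2) Nat.prime_two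
    rw [hbsq, hk]; ring_nf; exact ⟨2 * k * n, by ring⟩
  obtain ⟨b', hb'⟩ := hbe
  have hkn : k * n = b' ^ 2 := by
    have : (2 * b') ^ 2 = 2 * (2 * k) * n := by rw [← hb', ← hk]; exact hbsq
    nlinarith [this]
  have hknco : Int.gcd k n = 1 := by
    apply gcd_one_of_primes
    intro p hp hpk hpn
    exact prime_dvd_one_absurd hp hmnco (hk ▸ Dvd.dvd.mul_left hpk 2) hpn
  have hk0 : k ≠ 0 := by intro h0; rw [h0] at hk; exact hm0 (by omega)
  obtain ⟨r, hr⟩ := Int.sq_of_gcd_eq_one hknco hkn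
  obtain ⟨s, hsor⟩ := Int.sq_of_gcd_eq_one (by rw [Int.gcd_comm]; exact hknco)
    (by rw [mul_comm]; exact hkn)
  -- k² = r⁴, n² = s⁴
  have hk4 : k ^ 2 = r ^ 4 := by rcases hr with h1 | h1 <;> rw [h1] <;> ring
  have hn4 : n ^ 2 = s ^ 4 := by rcases hsor with h1 | h1 <;> rw [h1] <;> ring
  have hs2 : s % 2 = 1 := by
    rcases Int.even_or_odd s with ⟨t, ht⟩ | hodd
    · exfalso
      have hsq : s ^ 2 = 2 * (2 * t ^ 2) := by subst ht; ring
      rcases hsor with h1 | h1 <;> rw [h1] at hn2 <;> omega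
    · exact Int.odd_iff.mp hodd
  have hr0 : r ≠ 0 := by
    intro h0; rw [h0] at hk4; simp at hk4; exact hk0 (by nlinarith [hk4])
  have hrsco : Int.gcd r s = 1 := by
    apply gcd_one_of_primes
    intro p hp hpr hps
    have h1 : (p:ℤ) ∣ k := Int.Prime.dvd_pow' hp (hk4 ▸ dvd_pow hpr (by norm_num) : (p:ℤ) ∣ k ^ 2)
    have h2 : (p:ℤ) ∣ n := Int.Prime.dvd_pow' hp (hn4 ▸ dvd_pow hps (by norm_num) : (p:ℤ) ∣ n ^ 2)
    exact prime_dvd_one_absurd hp hknco h1 h2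
  have haabs : (0:ℤ) < |a| := abs_pos.mpr ha
  have heq : |a| ^ 2 = s ^ 4 + 4 * r ^ 4 := by
    rw [sq_abs, ha2, hk, ← hn4]
    nlinarith [hk4]
  obtain ⟨e, f, h1, h2, h3, h4⟩ := desc haabs hr0 hs2 hrsco heq
  rw [Int.natAbs_abs] at h4
  exact ⟨e, f, s, h1, h2, by omega, h3, h4⟩

/-- No nontrivial coprime solutions to `a⁴ = b⁴ + c²` (Fermat). -/
lemma flt4sub (N : ℕ) : ∀ a b c : ℤ, a.natAbs ≤ N → Int.gcd a b = 1 → b ≠ 0 → c ≠ 0 →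
    a ^ 4 ≠ b ^ 4 + c ^ 2 := by
  induction N with
  | zero =>
    intro a b c hN _ hb hc h
    have : a = 0 := by omega
    subst this
    nlinarith [pow_pos (abs_pos.mpr hb) 4, sq_nonneg c, abs_pos.mpr hc,
      sq_abs c, sq_nonneg (b^2), pow_ne_zero 4 hb, sq_nonneg b]
  | succ N ih =>
    intro a b c hN hab hb hc h
    have ha : a ≠ 0 := by
      intro h0; subst h0
      nlinarith [pow_pos (abs_pos.mpr hb) 2, sq_abs b, sq_nonneg (b^2 : ℤ),
        pow_pos (abs_pos.mpr hc) 2, sq_abs c]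
    -- coprimality of legs
    have hco : Int.gcd (b ^ 2) c = 1 := by
      apply gcd_one_of_primes
      intro p hp hpb2 hpc
      have hpb : (p : ℤ) ∣ b := Int.Prime.dvd_pow' hp hpb2
      have hpa : (p : ℤ) ∣ a := by
        apply Int.Prime.dvd_pow' (k := 4) hp
        rw [h]
        exact dvd_add (dvd_pow hpb (by norm_num)) (dvd_pow hpc (by norm_num))
      exact prime_dvd_one_absurd hp hab hpa hpb
    have hT : PythagoreanTriple (b ^ 2) c (a ^ 2) := by
      show b ^ 2 * b ^ 2 + c * c = a ^ 2 * a ^ 2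
      linear_combination -h
    obtain ⟨m, n, hmn, haz, hmnco, hpar⟩ := PythagoreanTriple.coprime_classification.mp ⟨hT, hco⟩
    have ha2 : a ^ 2 = m ^ 2 + n ^ 2 := by
      rcases haz with h1 | h1
      · exact h1
      · exfalso
        nlinarith [sq_nonneg m, sq_nonneg n, pow_pos (abs_pos.mpr ha) 2, sq_abs a]
    rcases hmn with ⟨hb2, hceq⟩ | ⟨hb2, hceq⟩
    · -- case c = 2mn even : descend to m⁴ = n⁴ + (ab)²
      have hn0 : n ≠ 0 := by intro h0; rw [h0] at hceq; simp at hceq; exact hc hceq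
      have hm0 : m ≠ 0 := by intro h0; rw [h0] at hceq; simp at hceq; exact hc hceq
      have hkey : m ^ 4 = n ^ 4 + (a * b) ^ 2 := by
        linear_combination (-(b ^ 2)) * ha2 - (m ^ 2 + n ^ 2) * hb2
      have hlt : m.natAbs < a.natAbs := by
        rw [Int.natAbs_lt_iff_sq_lt]
        nlinarith [sq_nonneg n, pow_pos (abs_pos.mpr hn0) 2, sq_abs n]
      exact ih m n (a * b) (by omega) hmnco hn0 (mul_ne_zero ha hb) hkey
    · -- case b² = 2mn even
      rcases hpar with ⟨hm2, hn2⟩ | ⟨hm2, hn2⟩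
      · obtain ⟨e, f, s, h1, h2, h3, h4, h5⟩ := sub_case2 ha hb hmnco hm2 hn2 hb2 ha2
        exact ih f e s (by omega) h1 h2 h3 h4
      · obtain ⟨e, f, s, h1, h2, h3, h4, h5⟩ := sub_case2 ha hb
          (by rw [Int.gcd_comm]; exact hmnco) hn2 hm2 (by rw [hb2]; ring)
          (by rw [ha2]; ring)
        exact ih f e s (by omega) h1 h2 h3 h4

lemma flt4sub' {a b c : ℤ} (hab : Int.gcd a b = 1) (hb : b ≠ 0) (hc : c ≠ 0) :
    a ^ 4 ≠ b ^ 4 + c ^ 2 :=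
  flt4sub a.natAbs a b c le_rfl hab hb hc

lemma no_aux {a r s : ℤ} (ha : 0 < a) (hr : r ≠ 0) (hs : s % 2 = 1)
    (hco : Int.gcd r s = 1) (h : a ^ 2 = s ^ 4 + 4 * r ^ 4) : False := by
  obtain ⟨e, f, h1, h2, h3, _⟩ := desc ha hr hs hco h
  exact flt4sub' h1 h2 (by omega) h3

lemma not_sq8 (z : ℤ) : z ^ 2 ≠ 8 := by
  intro h
  obtain ⟨w, hw⟩ : (2:ℤ) ∣ z :=
    Int.Prime.dvd_pow' (k := 2) Nat.prime_two (by rw [h]; norm_num)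
  subst hw
  have hw2 : w ^ 2 = 2 := by nlinarith
  obtain ⟨v, hv⟩ : (2:ℤ) ∣ w :=
    Int.Prime.dvd_pow' (k := 2) Nat.prime_two (by rw [hw2]; norm_num)
  subst hv
  have h3 : 2 * v ^ 2 = 1 := by nlinarith
  have : (2:ℤ) ∣ 1 := ⟨v ^ 2, h3.symm⟩
  norm_num at this

lemma dvd_of_dvd_two_mul {p : ℕ} (hp : p.Prime) (hp2 : p ≠ 2) {x : ℤ}
    (h : (p : ℤ) ∣ 2 * x) : (p : ℤ) ∣ x := by
  rcases Int.Prime.dvd_mul' hp h with h2 | h2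
  · exact absurd ((Nat.prime_dvd_prime_iff_eq hp Nat.prime_two).mp
      (by exact_mod_cast h2)) hp2
  · exact h2

lemma no_eq1 : ¬ ∃ x y z : ℤ, Int.gcd x y = 1 ∧ x * y ≠ 0 ∧ x ^ 4 + 4 * y ^ 4 = z ^ 2 := by
  rintro ⟨x, y, z, hco, hxy, h⟩
  have hx : x ≠ 0 := fun h0 => hxy (by rw [h0]; ring)
  have hy : y ≠ 0 := fun h0 => hxy (by rw [h0]; ring)
  have hx4 : 0 < x ^ 4 := by positivity
  have hy4 : 0 < y ^ 4 := by positivity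
  have hz : z ≠ 0 := by
    intro h0; rw [h0] at h; nlinarith
  rcases Int.even_or_odd x with ⟨u, hu⟩ | hodd
  · -- x even, so y odd
    have hyodd : y % 2 = 1 := by
      rcases Int.even_or_odd y with ⟨t, ht⟩ | hodd'
      · exact (prime_dvd_one_absurd Nat.prime_two hco
          ⟨u, by omega⟩ ⟨t, by omega⟩).elim
      · exact Int.odd_iff.mp hodd'
    have hu0 : u ≠ 0 := by intro h0; rw [h0] at hu; exact hx (by omega)
    have hzev : (2 : ℤ) ∣ z := by
      apply Int.Prime.dvd_pow' (k := 2) Nat.prime_two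
      rw [← h, hu]
      exact ⟨8 * u ^ 4 + 2 * y ^ 4, by ring⟩
    obtain ⟨w, hw⟩ := hzev
    have hweq : w ^ 2 = y ^ 4 + 4 * u ^ 4 := by
      have h5 : (2 * w) ^ 2 = (u + u) ^ 4 + 4 * y ^ 4 := by rw [← hw, ← hu]; exact h.symm
      nlinarith [h5]
    have hw0 : 0 < |w| := by
      rw [abs_pos]
      intro h0; rw [h0] at hweq; nlinarith [pow_pos (abs_pos.mpr hu0) 4, sq_abs u,
        pow_pos (abs_pos.mpr hy) 4, sq_abs y]
    have hcouy : Int.gcd u y = 1 := by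
      apply gcd_one_of_primes
      intro p hp hpu hpy
      exact prime_dvd_one_absurd hp hco (hu ▸ (Dvd.dvd.add hpu hpu)) hpy
    exact no_aux hw0 hu0 hyodd hcouy (by rw [sq_abs]; exact hweq)
  · -- x odd
    have hz0 : 0 < |z| := abs_pos.mpr hz
    have hcoyx : Int.gcd y x = 1 := by rw [Int.gcd_comm]; exact hco
    exact no_aux hz0 hy (Int.odd_iff.mp hodd) hcoyx (by rw [sq_abs, ← h])

lemma mod16 : ∀ k l z : ZMod 16,
    (2*k+1)^4 + 6*(2*k+1)^2*(2*l+1)^2 + (2*l+1)^4 ≠ z^2 := by decide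

lemma no_eq2 : ¬ ∃ x y z : ℤ, Int.gcd x y = 1 ∧ x * y ≠ 0 ∧
    x ^ 4 + 6 * x ^ 2 * y ^ 2 + y ^ 4 = z ^ 2 := by
  rintro ⟨x, y, z, hco, hxy, h⟩
  have hx : x ≠ 0 := fun h0 => hxy (by rw [h0]; ring)
  have hy : y ≠ 0 := fun h0 => hxy (by rw [h0]; ring)
  -- x and y have opposite parity
  have hpar : ¬ (x % 2 = 1 ∧ y % 2 = 1) := by
    rintro ⟨hx1, hy1⟩
    obtain ⟨k, hk⟩ : ∃ k, x = 2 * k + 1 := ⟨x / 2, by omega⟩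
    obtain ⟨l, hl⟩ : ∃ l, y = 2 * l + 1 := ⟨y / 2, by omega⟩
    subst hk hl
    apply mod16 (k : ZMod 16) (l : ZMod 16) (z : ZMod 16)
    exact_mod_cast congrArg (fun t : ℤ => (t : ZMod 16)) h
  have hnotboth : ¬ (x % 2 = 0 ∧ y % 2 = 0) := by
    rintro ⟨hx0, hy0⟩
    exact prime_dvd_one_absurd Nat.prime_two hco ⟨x / 2, by omega⟩ ⟨y / 2, by omega⟩
  set u := x + y with hudef
  set v := x - y with hvdef
  have huo : u % 2 = 1 := by omega
  have hvo : v % 2 = 1 := by omega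
  -- degenerate cases x = ± y
  have hdeg : ∀ w : ℤ, x = w → (w = y ∨ w = -y) → False := by
    rintro w rfl hw
    have hna : x.natAbs = y.natAbs := by
      rcases hw with rfl | rfl
      · rfl
      · exact Int.natAbs_neg y
    have h1 : y.natAbs = 1 := by
      have := hco
      unfold Int.gcd at this
      rwa [hna, Nat.gcd_self] at this
    have hy4 : y ^ 4 = 1 := by
      rcases Int.natAbs_eq_iff.mp h1 with rfl | rfl <;> norm_num
    have hx2 : x ^ 2 = y ^ 2 := by rcases hw with rfl | rfl <;> ring
    apply not_sq8 z
    have h8 : z ^ 2 = 8 * y ^ 4 := by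
      rw [← h]
      linear_combination (x ^ 2 + 7 * y ^ 2) * hx2
    rw [h8, hy4]; ring
  have hu0 : u ≠ 0 := by
    intro h0
    exact hdeg x rfl (Or.inr (by omega))
  have hv0 : v ≠ 0 := by
    intro h0
    exact hdeg x rfl (Or.inl (by omega))
  have huv : Int.gcd u v = 1 := by
    apply gcd_one_of_primes
    intro p hp hpu hpv
    have hp2 : p ≠ 2 := by
      rintro rfl
      obtain ⟨t, ht⟩ := hpu
      omega
    have hpx : (p:ℤ) ∣ x := by
      apply dvd_of_dvd_two_mul hp hp2
      have := dvd_add hpu hpv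
      have he : u + v = 2 * x := by omega
      rwa [he] at this
    have hpy : (p:ℤ) ∣ y := by
      apply dvd_of_dvd_two_mul hp hp2
      have := dvd_sub hpu hpv
      have he : u - v = 2 * y := by omega
      rwa [he] at this
    exact prime_dvd_one_absurd hp hco hpx hpy
  have h2z : u ^ 4 + v ^ 4 = 2 * z ^ 2 := by
    rw [hudef, hvdef]; linear_combination 2 * h
  have hz0 : z ≠ 0 := by
    intro h0
    rw [h0] at h2z
    nlinarith [pow_pos (abs_pos.mpr hu0) 4, sq_abs u, pow_pos (abs_pos.mpr hv0) 4, sq_abs v]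
  have hu4 : u ^ 4 % 2 = 1 := Int.odd_iff.mp ((Int.odd_iff.mpr huo).pow)
  have hv4 : v ^ 4 % 2 = 1 := Int.odd_iff.mp ((Int.odd_iff.mpr hvo).pow)
  obtain ⟨k, hk⟩ : ∃ k, u ^ 4 - v ^ 4 = 2 * k := ⟨(u ^ 4 - v ^ 4) / 2, by omega⟩
  have hw2 : |z| ^ 2 = z ^ 2 := sq_abs z
  have hkey4 : 4 * |z| ^ 4 = 4 * ((u * v) ^ 4 + k ^ 2) := by
    linear_combination (4 * (|z| ^ 2 + z ^ 2)) * hw2 - (u ^ 4 + v ^ 4 + 2 * z ^ 2) * h2z +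
      (u ^ 4 - v ^ 4 + 2 * k) * hk
  have hkey : |z| ^ 4 = (u * v) ^ 4 + k ^ 2 := by linarith
  have hk0 : k ≠ 0 := by
    rintro rfl
    rw [mul_zero] at hk
    have h0 : (u ^ 2 - v ^ 2) * (u ^ 2 + v ^ 2) = 0 := by linear_combination hk
    rcases mul_eq_zero.mp h0 with h1 | h1
    · have h2 : (u - v) * (u + v) = 0 := by linear_combination h1
      rcases mul_eq_zero.mp h2 with h3 | h3
      · exact hy (by omega)
      · exact hx (by omega)
    · exact hu0 (by nlinarith [sq_nonneg u, sq_nonneg v])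
  have hgcd : Int.gcd |z| (u * v) = 1 := by
    apply gcd_one_of_primes
    intro p hp hpw hpuv
    rw [dvd_abs] at hpw
    rcases Int.Prime.dvd_mul' hp hpuv with hpu | hpv
    · have hpv' : (p:ℤ) ∣ v := by
        apply Int.Prime.dvd_pow' (k := 4) hp
        have : (p:ℤ) ∣ 2 * z ^ 2 - u ^ 4 :=
          dvd_sub (Dvd.dvd.mul_left (dvd_pow hpw (by norm_num)) 2)
            (dvd_pow hpu (by norm_num))
        rwa [← h2z, add_sub_cancel_left] at this
      exact prime_dvd_one_absurd hp huv hpu hpv'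
    · have hpu' : (p:ℤ) ∣ u := by
        apply Int.Prime.dvd_pow' (k := 4) hp
        have : (p:ℤ) ∣ 2 * z ^ 2 - v ^ 4 :=
          dvd_sub (Dvd.dvd.mul_left (dvd_pow hpw (by norm_num)) 2)
            (dvd_pow hpv (by norm_num))
        rwa [← h2z, add_sub_cancel_right] at this
      exact prime_dvd_one_absurd hp huv hpu' hpv
  exact flt4sub' hgcd (mul_ne_zero hu0 hv0) hk0 hkey

theorem quartic_equivalence :
    (∃ x y z : ℤ, Int.gcd x y = 1 ∧ x * y ≠ 0 ∧ x ^ 4 + 4 * y ^ 4 = z ^ 2) ↔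
    (∃ x y z : ℤ, Int.gcd x y = 1 ∧ x * y ≠ 0 ∧
      x ^ 4 + 6 * x ^ 2 * y ^ 2 + y ^ 4 = z ^ 2) :=
  iff_of_false no_eq1 no_eq2
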